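/- arXiv:2101.07249 — 3 statements merged into one kernel-verified Lean document; each statement's English description precedes it below -/
import Mathlib

section
/- Let A be an n×n real symmetric positive definite matrix and let S be an n×k real matrix (k ≤ n) with linearly independent columns. Then SᵀAS is invertible and the limited memory preconditioner P_k = (I − S(SᵀAS)⁻¹SᵀA)(I − AS(SᵀAS)⁻¹Sᵀ) + S(SᵀAS)⁻¹Sᵀ is symmetric positive definite. -/
/-!
With `M = Sᴴ A S` (positive definite since `A` is and `S` is injective) and
`N = 1 - A S M⁻¹ Sᴴ`, the self-adjointness of `A` and `M⁻¹` gives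
`P = Nᴴ N + S M⁻¹ Sᴴ`, a sum of two positive semidefinite forms `‖N x‖²` and
`⟪Sᴴ x, M⁻¹ Sᴴ x⟫`. They cannot vanish together at `x ≠ 0`, since `N x = x` whenever
`Sᴴ x = 0`.
-/

open Matrix

namespace Matrix

variable {m₁ m₂ n k R K : Type*} [Fintype m₁] [Fintype m₂] [Fintype n] [Fintype k]

lemma star_dotProduct_conjTranspose_mul_mul_mulVec {m : Type*} [Fintype m] [Ring R] [StarRing R]
    (A : Matrix m m R) (C : Matrix m n R) (x : n → R) :
    star x ⬝ᵥ ((Cᴴ * A * C) *ᵥ x) = star (C *ᵥ x) ⬝ᵥ (A *ᵥ (C *ᵥ x)) := by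
  simp only [star_mulVec, dotProduct_mulVec, vecMul_vecMul]

lemma PosDef.conjTranspose_mul_mul_add_conjTranspose_mul_mul [Ring R] [PartialOrder R] [StarRing R]
    [AddLeftMono R] {A₁ : Matrix m₁ m₁ R} {A₂ : Matrix m₂ m₂ R} (hA₁ : A₁.PosDef)
    (hA₂ : A₂.PosDef) {C₁ : Matrix m₁ n R} {C₂ : Matrix m₂ n R}
    (hC : ∀ x, C₁ *ᵥ x = 0 → C₂ *ᵥ x = 0 → x = 0) :
    (C₁ᴴ * A₁ * C₁ + C₂ᴴ * A₂ * C₂).PosDef := by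
  refine .of_dotProduct_mulVec_pos ((isHermitian_conjTranspose_mul_mul _ hA₁.1).add
    (isHermitian_conjTranspose_mul_mul _ hA₂.1)) fun x hx => ?_
  rw [add_mulVec, dotProduct_add, star_dotProduct_conjTranspose_mul_mul_mulVec,
    star_dotProduct_conjTranspose_mul_mul_mulVec]
  by_cases h : C₁ *ᵥ x = 0
  · exact add_pos_of_nonneg_of_pos (hA₁.posSemidef.dotProduct_mulVec_nonneg _)
      (hA₂.dotProduct_mulVec_pos fun h' => hx (hC x h h'))
  · exact add_pos_of_pos_of_nonneg (hA₁.dotProduct_mulVec_pos h)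
      (hA₂.posSemidef.dotProduct_mulVec_nonneg _)

variable [Field K] [PartialOrder K] [StarRing K] [StarOrderedRing K]
  [DecidableEq n] [DecidableEq k]

noncomputable def limitedMemoryPreconditioner (A : Matrix n n K) (S : Matrix n k K) :
    Matrix n n K :=
  (1 - S * (Sᴴ * A * S)⁻¹ * Sᴴ * A) * (1 - A * S * (Sᴴ * A * S)⁻¹ * Sᴴ) +
    S * (Sᴴ * A * S)⁻¹ * Sᴴ

theorem posDef_limitedMemoryPreconditioner {A : Matrix n n K} (hA : A.PosDef) {S : Matrix n k K}
    (hS : Function.Injective S.mulVec) : (limitedMemoryPreconditioner A S).PosDef := by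
  set M := Sᴴ * A * S
  have hM : M.PosDef := hA.conjTranspose_mul_mul_same hS
  set N := 1 - A * S * M⁻¹ * Sᴴ
  have hN : Nᴴ = 1 - S * M⁻¹ * Sᴴ * A := by
    simp only [N, conjTranspose_sub, conjTranspose_one, conjTranspose_mul,
      conjTranspose_conjTranspose, hA.1.eq, hM.inv.1.eq, Matrix.mul_assoc]
  have hP : limitedMemoryPreconditioner A S = Nᴴ * 1 * N + Sᴴᴴ * M⁻¹ * Sᴴ := by
    rw [hN, Matrix.mul_one, conjTranspose_conjTranspose]; rfl
  rw [hP]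
  refine PosDef.one.conjTranspose_mul_mul_add_conjTranspose_mul_mul hM.inv fun x hNx hSx => ?_
  simpa [N, sub_mulVec, ← mulVec_mulVec, hSx] using hNx

end Matrix

theorem stmt_5_general (n k : ℕ)
    (A : Matrix (Fin n) (Fin n) ℝ) (hA : A.PosDef)
    (S : Matrix (Fin n) (Fin k) ℝ)
    (hS : LinearIndependent ℝ (fun j : Fin k => fun i : Fin n => S i j)) :
    IsUnit (Sᵀ * A * S) ∧
    ((1 - S * (Sᵀ * A * S)⁻¹ * Sᵀ * A) * (1 - A * S * (Sᵀ * A * S)⁻¹ * Sᵀ) +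
      S * (Sᵀ * A * S)⁻¹ * Sᵀ).PosDef := by
  have hS' : Function.Injective S.mulVec := mulVec_injective_iff.mpr hS
  rw [← conjTranspose_eq_transpose_of_trivial]
  exact ⟨(hA.conjTranspose_mul_mul_same hS').isUnit, posDef_limitedMemoryPreconditioner hA hS'⟩

theorem stmt_5 (n k : ℕ) (hk : k ≤ n)
    (A : Matrix (Fin n) (Fin n) ℝ) (hA : A.PosDef)
    (S : Matrix (Fin n) (Fin k) ℝ)
    (hS : LinearIndependent ℝ (fun j : Fin k => fun i : Fin n => S i j)) :
    IsUnit (Sᵀ * A * S) ∧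
    ((1 - S * (Sᵀ * A * S)⁻¹ * Sᵀ * A) * (1 - A * S * (Sᵀ * A * S)⁻¹ * Sᵀ) +
      S * (Sᵀ * A * S)⁻¹ * Sᵀ).PosDef :=
  stmt_5_general n k A hA S hS
end

section
/- Let A be an n×n real symmetric positive definite matrix and let v_1, …, v_k ∈ ℝ^n be orthonormal eigenvectors of A with corresponding positive eigenvalues λ_1, …, λ_k. Define C_k^{sp} = ∏_{i=1}^{k} (I − (1 − (√λ_i)⁻¹) v_i v_iᵀ). Then C_k^{sp} (C_k^{sp})ᵀ = I − Σ_{i=1}^{k} (1 − λ_i⁻¹) v_i v_iᵀ; that is, C_k^{sp} is a factor of the spectral-LMP P_k^{sp} = C_k^{sp}(C_k^{sp})ᵀ. -/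
/-!
The rank-one matrices `vᵢ vᵢᵀ` of orthonormal vectors are orthogonal idempotents, so the factors
`1 - (1 - aᵢ) vᵢ vᵢᵀ` of `C` multiply out to `1 - ∑ (1 - aᵢ) vᵢ vᵢᵀ`, a symmetric matrix acting
as `aᵢ` on `vᵢ`. Multiplying two such matrices multiplies the coefficients `aᵢ`, and
`(√λᵢ)⁻¹ · (√λᵢ)⁻¹ = λᵢ⁻¹`.
-/

open Matrix

theorem List.prod_map_one_sub_of_pairwise_mul_eq_zero {R ι : Type*} [Ring R] (e : ι → R)
    {l : List ι} (hl : l.Pairwise fun i j => e i * e j = 0) :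
    (l.map fun i => 1 - e i).prod = 1 - (l.map e).sum := by
  induction l with
  | nil => simp
  | cons i t ih =>
    obtain ⟨hi, ht⟩ := List.pairwise_cons.mp hl
    have h_mul_sum : e i * (t.map e).sum = 0 := by
      rw [← List.sum_map_mul_left]
      exact List.sum_eq_zero fun x hx => by
        obtain ⟨j, hj, rfl⟩ := List.mem_map.mp hx
        exact hi j hj
    simp only [List.map_cons, List.prod_cons, List.sum_cons, ih ht, mul_sub, sub_mul, one_mul,
      mul_one, h_mul_sum]
    abel

namespace OrthogonalIdempotents

variable {K A ι : Type*} [CommRing K] [Ring A] [Algebra K A] {P : ι → A}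

theorem list_prod_map_one_sub_smul (hP : OrthogonalIdempotents P) (c : ι → K) {l : List ι}
    (hl : l.Nodup) :
    (l.map fun i => 1 - c i • P i).prod = 1 - (l.map fun i => c i • P i).sum :=
  List.prod_map_one_sub_of_pairwise_mul_eq_zero _ <| hl.imp fun hij => by
    rw [smul_mul_smul_comm, hP.ortho hij, smul_zero]

theorem sum_smul_mul_sum_smul [Fintype ι] (hP : OrthogonalIdempotents P) (a b : ι → K) :
    (∑ i, a i • P i) * ∑ i, b i • P i = ∑ i, (a i * b i) • P i := by
  classical
  simp only [Finset.sum_mul_sum, smul_mul_smul_comm, hP.mul_eq, smul_ite, smul_zero,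
    Finset.sum_ite_eq, Finset.mem_univ, if_true]

theorem one_sub_sum_smul_mul_one_sub_sum_smul [Fintype ι] (hP : OrthogonalIdempotents P)
    (a b : ι → K) :
    (1 - ∑ i, (1 - a i) • P i) * (1 - ∑ i, (1 - b i) • P i) = 1 - ∑ i, (1 - a i * b i) • P i := by
  rw [mul_sub, sub_mul, sub_mul, one_mul, mul_one, one_mul, hP.sum_smul_mul_sum_smul,
    sub_sub, ← Finset.sum_sub_distrib, ← Finset.sum_add_distrib]
  congr 2 with i
  rw [← sub_smul, ← add_smul]
  congr 1
  ring

end OrthogonalIdempotents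

theorem Matrix.orthogonalIdempotents_vecMulVec_self {m ι α : Type*} [Fintype m] [DecidableEq m]
    [DecidableEq ι] [CommSemiring α] {v : ι → m → α}
    (hv : ∀ i j, v i ⬝ᵥ v j = if i = j then 1 else 0) :
    OrthogonalIdempotents fun i => vecMulVec (v i) (v i) :=
  OrthogonalIdempotents.iff_mul_eq.mpr fun i j => by
    rw [vecMulVec_mul_vecMulVec, hv]
    split_ifs with hij
    · rw [one_smul, hij]
    · rw [zero_smul, vecMulVec_zero]

theorem stmt_9_general (n k : ℕ)
    (v : Fin k → Fin n → ℝ) (lam : Fin k → ℝ)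
    (horth : ∀ i j : Fin k, v i ⬝ᵥ v j = if i = j then (1 : ℝ) else 0)
    (hpos : ∀ i : Fin k, 0 < lam i)
    (C : Matrix (Fin n) (Fin n) ℝ)
    (hC : C = ((List.finRange k).map
      (fun i => 1 - (1 - (Real.sqrt (lam i))⁻¹) • vecMulVec (v i) (v i))).prod) :
    C * Cᵀ = 1 - ∑ i : Fin k, (1 - (lam i)⁻¹) • vecMulVec (v i) (v i) := by
  have hP := orthogonalIdempotents_vecMulVec_self horth
  have hC_sum : C = 1 - ∑ i, (1 - (Real.sqrt (lam i))⁻¹) • vecMulVec (v i) (v i) := by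
    rw [hC, hP.list_prod_map_one_sub_smul _ (List.nodup_finRange k), Fin.sum_univ_def]
  have hC_symm : Cᵀ = C := by
    simp only [hC_sum, transpose_sub, transpose_one, transpose_sum, transpose_smul,
      transpose_vecMulVec]
  have hsqrt : ∀ i, (Real.sqrt (lam i))⁻¹ * (Real.sqrt (lam i))⁻¹ = (lam i)⁻¹ := fun i => by
    rw [← mul_inv, Real.mul_self_sqrt (hpos i).le]
  rw [hC_symm, hC_sum, hP.one_sub_sum_smul_mul_one_sub_sum_smul]
  simp only [hsqrt]

theorem stmt_9 (n k : ℕ) (hk : k ≤ n)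
    (A : Matrix (Fin n) (Fin n) ℝ) (hA : A.PosDef)
    (v : Fin k → Fin n → ℝ) (lam : Fin k → ℝ)
    (horth : ∀ i j : Fin k, v i ⬝ᵥ v j = if i = j then (1 : ℝ) else 0)
    (heig : ∀ i : Fin k, A *ᵥ v i = lam i • v i)
    (hpos : ∀ i : Fin k, 0 < lam i)
    (C : Matrix (Fin n) (Fin n) ℝ)
    (hC : C = ((List.finRange k).map
      (fun i => 1 - (1 - (Real.sqrt (lam i))⁻¹) • vecMulVec (v i) (v i))).prod) :
    C * Cᵀ = 1 - ∑ i : Fin k, (1 - (lam i)⁻¹) • vecMulVec (v i) (v i) :=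
  stmt_9_general n k v lam horth hpos C hC
end

section
/- Let A be an n×n real symmetric positive definite matrix with a full orthonormal eigenbasis v_1, …, v_n ∈ ℝ^n and corresponding positive eigenvalues λ_1, …, λ_n. For k ≤ n let C = ∏_{i=1}^{k} (I − (1 − (√λ_i)⁻¹) v_i v_iᵀ). Then the split-preconditioned matrix CᵀAC satisfies CᵀAC v_i = v_i for every i ≤ k and CᵀAC v_j = λ_j v_j for every j > k; i.e., CᵀAC has eigenvalue 1 with the eigenvectors v_1, …, v_k, and its remaining eigenvalues are the unpreconditioned eigenvalues λ_{k+1}, …, λ_n with the same eigenvectors. -/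
/-!
Each factor `1 - (1 - μ) • u uᵀ` of `C` is symmetric and, for orthonormal `u`'s, scales its own
`u` by `μ` and fixes every other `u`. So each `v j` is an eigenvector of both `C` and `Cᵀ`, with
eigenvalue `c j = (√λ_j)⁻¹` if `j < k` and `1` otherwise, and `CᵀAC v_j = c_j² λ_j v_j`.
-/

open Matrix

namespace Matrix

variable {m R : Type*} [CommRing R]

theorem list_prod_map_mulVec_eq_smul [Fintype m] [DecidableEq m] {α : Type*}
    (f : α → Matrix m m R) (g : α → R) (w : m → R) (L : List α) (h : ∀ a ∈ L, f a *ᵥ w = g a • w) :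
    (L.map f).prod *ᵥ w = (L.map g).prod • w := by
  induction L with
  | nil => simp
  | cons a L ih =>
    rw [List.map_cons, List.prod_cons, ← mulVec_mulVec,
      ih fun b hb => h b (List.mem_cons_of_mem a hb), mulVec_smul, h a List.mem_cons_self,
      smul_smul, List.map_cons, List.prod_cons, mul_comm]

theorem transpose_list_prod_map_of_isSymm [Fintype m] [DecidableEq m] {α : Type*}
    (f : α → Matrix m m R) (hf : ∀ a, (f a).IsSymm) (L : List α) :
    (L.map f).prodᵀ = (L.reverse.map f).prod := by
  rw [transpose_list_prod, List.map_map, List.map_reverse]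
  congr 3
  exact funext hf

theorem transpose_mul_mul_mulVec_eq_smul [Fintype m] {C A : Matrix m m R} {w : m → R}
    {c μ : R} (hC : C *ᵥ w = c • w) (hCt : Cᵀ *ᵥ w = c • w) (hA : A *ᵥ w = μ • w) :
    (Cᵀ * A * C) *ᵥ w = (c * μ * c) • w := by
  rw [← mulVec_mulVec, ← mulVec_mulVec, hC, mulVec_smul, hA, smul_smul, mulVec_smul, hCt,
    smul_smul]

section Orthonormal

variable [Fintype m] [DecidableEq m] {ι : Type*} [DecidableEq ι] {u : ι → m → R}

theorem one_sub_smul_vecMulVec_mulVec_of_orthonormal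
    (hu : ∀ i j, u i ⬝ᵥ u j = if i = j then 1 else 0) (μ : R) (i j : ι) :
    (1 - (1 - μ) • vecMulVec (u i) (u i)) *ᵥ u j = (if i = j then μ else 1) • u j := by
  rw [sub_mulVec, one_mulVec, smul_mulVec, vecMulVec_mulVec, hu, op_smul_eq_smul]
  split_ifs with hij
  · subst hij
    module
  · simp

theorem list_prod_map_one_sub_smul_vecMulVec_mulVec_of_orthonormal {α : Type*}
    (hu : ∀ i j, u i ⬝ᵥ u j = if i = j then 1 else 0) (μ : ι → R) (e : α → ι) (L : List α)
    (j : ι) :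
    (L.map fun a => 1 - (1 - μ (e a)) • vecMulVec (u (e a)) (u (e a))).prod *ᵥ u j =
      (L.map fun a => if e a = j then μ (e a) else 1).prod • u j :=
  list_prod_map_mulVec_eq_smul _ _ _ L fun _ _ =>
    one_sub_smul_vecMulVec_mulVec_of_orthonormal hu _ _ _

theorem transpose_list_prod_map_one_sub_smul_vecMulVec_mulVec_of_orthonormal {α : Type*}
    (hu : ∀ i j, u i ⬝ᵥ u j = if i = j then 1 else 0) (μ : ι → R) (e : α → ι) (L : List α)
    (j : ι) :
    (L.map fun a => 1 - (1 - μ (e a)) • vecMulVec (u (e a)) (u (e a))).prodᵀ *ᵥ u j =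
      (L.map fun a => if e a = j then μ (e a) else 1).prod • u j := by
  rw [transpose_list_prod_map_of_isSymm _ fun _ => by simp [IsSymm, transpose_sub],
    list_prod_map_one_sub_smul_vecMulVec_mulVec_of_orthonormal hu, List.map_reverse,
    List.prod_reverse]

end Orthonormal

end Matrix

theorem Fin.prod_univ_castLE_ite {M : Type*} [CommMonoid M] {k n : ℕ} (hk : k ≤ n)
    (f : Fin n → M) (j : Fin n) :
    ∏ i : Fin k, (if Fin.castLE hk i = j then f (Fin.castLE hk i) else 1) =
      if (j : ℕ) < k then f j else 1 := by
  have h := Finset.prod_map Finset.univ (Fin.castLEEmb hk) (fun x => if x = j then f x else 1)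
  rw [Finset.prod_ite_eq'] at h
  refine h.symm.trans ?_
  have hmem : j ∈ Finset.univ.map (Fin.castLEEmb hk) ↔ (j : ℕ) < k := by
    simp only [Finset.mem_map, Finset.mem_univ, true_and]
    exact Set.ext_iff.mp (Fin.range_castLE hk) j
  simp only [hmem]

theorem stmt_10_general (n k : ℕ) (hk : k ≤ n)
    (A : Matrix (Fin n) (Fin n) ℝ)
    (v : Fin n → Fin n → ℝ) (lam : Fin n → ℝ)
    (horth : ∀ i j : Fin n, v i ⬝ᵥ v j = if i = j then (1 : ℝ) else 0)
    (heig : ∀ i : Fin n, A *ᵥ v i = lam i • v i)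
    (hpos : ∀ i : Fin n, 0 < lam i)
    (C : Matrix (Fin n) (Fin n) ℝ)
    (hC : C = ((List.finRange k).map
      (fun i => 1 - (1 - (Real.sqrt (lam (Fin.castLE hk i)))⁻¹) •
        vecMulVec (v (Fin.castLE hk i)) (v (Fin.castLE hk i)))).prod) :
    (∀ i : Fin n, (i : ℕ) < k → (Cᵀ * A * C) *ᵥ v i = v i) ∧
    (∀ j : Fin n, k ≤ (j : ℕ) → (Cᵀ * A * C) *ᵥ v j = lam j • v j) := by
  set c : Fin n → ℝ := fun j => if (j : ℕ) < k then (Real.sqrt (lam j))⁻¹ else 1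
  have hscale : ∀ j, ((List.finRange k).map fun i => if Fin.castLE hk i = j then
      (Real.sqrt (lam (Fin.castLE hk i)))⁻¹ else 1).prod = c j := fun j => by
    rw [← Fin.prod_univ_def]
    exact Fin.prod_univ_castLE_ite hk (fun j => (Real.sqrt (lam j))⁻¹) j
  have hCAC : ∀ j, (Cᵀ * A * C) *ᵥ v j = (c j * lam j * c j) • v j := fun j => by
    rw [← hscale j]
    subst hC
    exact transpose_mul_mul_mulVec_eq_smul
      (list_prod_map_one_sub_smul_vecMulVec_mulVec_of_orthonormal horth
        (fun j => (Real.sqrt (lam j))⁻¹) (Fin.castLE hk) _ j)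
      (transpose_list_prod_map_one_sub_smul_vecMulVec_mulVec_of_orthonormal horth
        (fun j => (Real.sqrt (lam j))⁻¹) (Fin.castLE hk) _ j)
      (heig j)
  refine ⟨fun i hi => ?_, fun j hj => ?_⟩
  · have hci : c i = (Real.sqrt (lam i))⁻¹ := if_pos hi
    have hsqrt : Real.sqrt (lam i) ≠ 0 := (Real.sqrt_pos.mpr (hpos i)).ne'
    have hscalar : (Real.sqrt (lam i))⁻¹ * lam i * (Real.sqrt (lam i))⁻¹ = 1 := by
      field_simp
      exact (Real.sq_sqrt (hpos i).le).symm
    rw [hCAC, hci, hscalar, one_smul]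
  · have hcj : c j = 1 := if_neg (not_lt.mpr hj)
    rw [hCAC, hcj, one_mul, mul_one]

theorem stmt_10 (n k : ℕ) (hk : k ≤ n)
    (A : Matrix (Fin n) (Fin n) ℝ) (hA : A.PosDef)
    (v : Fin n → Fin n → ℝ) (lam : Fin n → ℝ)
    (horth : ∀ i j : Fin n, v i ⬝ᵥ v j = if i = j then (1 : ℝ) else 0)
    (heig : ∀ i : Fin n, A *ᵥ v i = lam i • v i)
    (hpos : ∀ i : Fin n, 0 < lam i)
    (C : Matrix (Fin n) (Fin n) ℝ)
    (hC : C = ((List.finRange k).map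
      (fun i => 1 - (1 - (Real.sqrt (lam (Fin.castLE hk i)))⁻¹) •
        vecMulVec (v (Fin.castLE hk i)) (v (Fin.castLE hk i)))).prod) :
    (∀ i : Fin n, (i : ℕ) < k → (Cᵀ * A * C) *ᵥ v i = v i) ∧
    (∀ j : Fin n, k ≤ (j : ℕ) → (Cᵀ * A * C) *ᵥ v j = lam j • v j) :=
  stmt_10_general n k hk A v lam horth heig hpos C hC
end
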